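/- (Nonexistence of unbiased estimators for Φ-mutual information) Let X = Y = {1,2,3} and let Φ:[0,∞)→ℝ be a twice differentiable convex function that is not a polynomial of degree at most 1 on (0,3). Then for every m∈ℕ and every estimator D̂ : (X×Y)^m → ℝ there exists a joint distribution P on X×Y such that E_{(x⃗,y⃗)∼P^m}[D̂(x⃗,y⃗)] ≠ D_Φ(P ‖ P_X⊗P_Y). -/

import Mathlib

open scoped BigOperators

/-- Marginal on the first coordinate. -/
noncomputable def margX {X Y : Type*} [Fintype Y] (P : X → Y → ℝ) (x : X) : ℝ := ∑ y, P x y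

/-- Marginal on the second coordinate. -/
noncomputable def margY {X Y : Type*} [Fintype X] (P : X → Y → ℝ) (y : Y) : ℝ := ∑ x, P x y

/-- Φ-mutual information `D_Φ(P ‖ P_X ⊗ P_Y)`. -/
noncomputable def phiMI {X Y : Type*} [Fintype X] [Fintype Y] (Φ : ℝ → ℝ) (P : X → Y → ℝ) : ℝ :=
  ∑ x, ∑ y, margX P x * margY P y * Φ (P x y / (margX P x * margY P y))

section Aux
open Polynomial Set

noncomputable def antider (q : ℝ[X]) : ℝ[X] := q.sum fun n c => C (c/(n+1)) * X^(n+1)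

lemma antider_derivative (q : ℝ[X]) : (antider q).derivative = q := by
  unfold antider
  rw [Polynomial.sum, map_sum]
  conv_rhs => rw [← Polynomial.sum_C_mul_X_pow_eq q, Polynomial.sum]
  refine Finset.sum_congr rfl fun n hn => ?_
  rw [derivative_C_mul, derivative_X_pow, ← mul_assoc, ← C_mul, Nat.add_sub_cancel]
  congr 1
  push_cast
  field_simp

lemma poly_eq_of_eval_eq_Ioo {p q : ℝ[X]} {a b : ℝ} (hab : a < b)
    (h : ∀ x ∈ Set.Ioo a b, p.eval x = q.eval x) : p = q := by
  have := Polynomial.eq_zero_of_infinite_isRoot (p - q)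
    (((Set.Ioo_infinite hab).mono (fun x hx => by
      simp [Polynomial.IsRoot, h x hx])))
  linear_combination (norm := abel) this

lemma const_on_Ioo {f : ℝ → ℝ} {a b : ℝ}
    (hf : ∀ x ∈ Set.Ioo a b, HasDerivAt f 0 x) {x y : ℝ}
    (hx : x ∈ Set.Ioo a b) (hy : y ∈ Set.Ioo a b) : f x = f y := by
  wlog hxy : x ≤ y generalizing x y
  · exact (this hy hx (le_of_not_ge hxy)).symm
  have hsub : Set.Icc x y ⊆ Set.Ioo a b := Set.Icc_subset_Ioo hx.1 hy.2
  have := constant_of_has_deriv_right_zero (f := f) (a := x) (b := y)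
    (fun z hz => ((hf z (hsub hz)).continuousAt).continuousWithinAt)
    (fun z hz => ((hf z (hsub ⟨hz.1, hz.2.le⟩)).hasDerivWithinAt))
  exact (this y ⟨hxy, le_rfl⟩).symm

/-- if g has polynomial derivative on (a,b), then g is polynomial there,
with the polynomial an antiderivative. -/
lemma rep_of_deriv {g : ℝ → ℝ} {q : ℝ[X]} {a b : ℝ} (hab : a < b)
    (hg : ∀ x ∈ Set.Ioo a b, HasDerivAt g (q.eval x) x) :
    ∃ Q : ℝ[X], Q.derivative = q ∧ ∀ x ∈ Set.Ioo a b, g x = Q.eval x := by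
  set c : ℝ := (a+b)/2 with hc
  have hcm : c ∈ Set.Ioo a b := by constructor <;> simp only [hc] <;> linarith
  set h : ℝ → ℝ := fun x => g x - (antider q).eval x with hh
  have hd : ∀ x ∈ Set.Ioo a b, HasDerivAt h 0 x := by
    intro x hx
    have := (hg x hx).sub ((antider q).hasDerivAt x)
    rwa [antider_derivative, sub_self] at this
  refine ⟨antider q + C (h c), by simp [antider_derivative], fun x hx => ?_⟩
  have := const_on_Ioo hd hx hcm
  simp only [hh] at this
  simp only [eval_add, eval_C, hh]
  linarith

lemma key_pow (F : ℝ[X]) {u : ℝ} (w : ℝ) (hu : u ≠ 0) :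
    u ^ F.natDegree * F.eval (w / u)
      = ∑ k ∈ Finset.range (F.natDegree+1), F.coeff k * w^k * u^(F.natDegree - k) := by
  rw [Polynomial.eval_eq_sum_range, Finset.mul_sum]
  refine Finset.sum_congr rfl fun k hk => ?_
  have hk' : k ≤ F.natDegree := Nat.lt_succ_iff.mp (Finset.mem_range.mp hk)
  have h2 : u ^ F.natDegree = u^(F.natDegree - k) * u^k := by
    rw [← pow_add, Nat.sub_add_cancel hk']
  rw [h2, div_pow]
  field_simp

variable {m : ℕ} (Dhat : (Fin m → Fin 3 × Fin 3) → ℝ)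

lemma eval_exp (N : Fin 3 → Fin 3 → ℝ[X]) (t : ℝ) :
    (∑ v : Fin m → Fin 3 × Fin 3, (∏ i, N (v i).1 (v i).2) * C (Dhat v)).eval t
      = ∑ v : Fin m → Fin 3 × Fin 3, (∏ i, (N (v i).1 (v i).2).eval t) * Dhat v := by
  rw [Polynomial.eval_finset_sum]
  exact Finset.sum_congr rfl fun v _ => by rw [eval_mul, eval_C, eval_prod]

lemma map_exp (N : Fin 3 → Fin 3 → Polynomial (Polynomial ℝ)) (a : ℝ) :
    (∑ v : Fin m → Fin 3 × Fin 3, (∏ i, N (v i).1 (v i).2) * C (C (Dhat v))).map (evalRingHom a)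
      = ∑ v : Fin m → Fin 3 × Fin 3,
          (∏ i, (N (v i).1 (v i).2).map (evalRingHom a)) * C (Dhat v) := by
  rw [← coe_mapRingHom, map_sum]
  refine Finset.sum_congr rfl fun v _ => ?_
  rw [map_mul, map_prod]
  simp [coe_mapRingHom]

lemma stage1 (Φ D1 D2 : ℝ → ℝ)
    (hΦ1 : ∀ x : ℝ, 0 < x → HasDerivAt Φ (D1 x) x)
    (hΦ2 : ∀ x : ℝ, 0 < x → HasDerivAt D1 (D2 x) x)
    {m : ℕ} (Dhat : (Fin m → Fin 3 × Fin 3) → ℝ)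
    (hcon : ∀ P : Fin 3 → Fin 3 → ℝ, (∀ x y, 0 ≤ P x y) → (∑ x, ∑ y, P x y = 1) →
       (∑ v : Fin m → Fin 3 × Fin 3, (∏ i, P (v i).1 (v i).2) * Dhat v) = phiMI Φ P)
    {b : ℝ} (hb : b ∈ Set.Ioo (0:ℝ) 3) :
    ∃ r : ℝ[X], ∀ a ∈ Set.Ioo 0 (3-b), D2 a + D2 b = r.eval a := by
  classical
  set e0 : Polynomial (Polynomial ℝ) := C (C (1/9) * X) + C (C (1/9)) * X with he0
  set e1 : Polynomial (Polynomial ℝ) := C (C (b/9)) - C (C (1/9)) * X with he1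
  set e2 : Polynomial (Polynomial ℝ) := C (C ((3-b)/9) - C (1/9) * X) with he2
  set N2 : Fin 3 → Fin 3 → Polynomial (Polynomial ℝ) :=
    ![![e0,e1,e2],![e2,e0,e1],![e1,e2,e0]] with hN2
  set Mr : ℝ → ℝ → Fin 3 → Fin 3 → ℝ := fun a t =>
    ![![(a+t)/9, (b-t)/9, (3-b-a)/9],![(3-b-a)/9,(a+t)/9,(b-t)/9],![(b-t)/9,(3-b-a)/9,(a+t)/9]]
    with hMr
  have bridge : ∀ (a t : ℝ) (x y : Fin 3), ((N2 x y).map (evalRingHom a)).eval t = Mr a t x y := by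
    intro a t x y
    fin_cases x <;> fin_cases y <;>
      simp [hN2, he0, he1, he2, hMr, Polynomial.map_add, Polynomial.map_sub,
        Polynomial.map_mul, map_C, map_X] <;> ring
  set EP2 : Polynomial (Polynomial ℝ) :=
    ∑ v : Fin m → Fin 3 × Fin 3, (∏ i, N2 (v i).1 (v i).2) * C (C (Dhat v)) with hEP2
  refine ⟨C 3 * (EP2.derivative.derivative.coeff 0), ?_⟩
  intro a ha
  obtain ⟨ha0, ha3⟩ := ha
  have hEPa : ∀ t : ℝ, ((EP2.map (evalRingHom a))).eval t
      = ∑ v : Fin m → Fin 3 × Fin 3, (∏ i, Mr a t (v i).1 (v i).2) * Dhat v := by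
    intro t
    rw [hEP2, map_exp, eval_exp Dhat (fun x y => (N2 x y).map (evalRingHom a)) t]
    exact Finset.sum_congr rfl fun v _ => by
      rw [show (∏ i, ((N2 (v i).1 (v i).2).map (evalRingHom a)).eval t)
            = ∏ i, Mr a t (v i).1 (v i).2 from
        Finset.prod_congr rfl fun i _ => bridge a t _ _]
  set qa : ℝ[X] := C 3 * (EP2.map (evalRingHom a)) - C (Φ (3-b-a)) with hqa
  have hkey : ∀ t ∈ Set.Ioo (-a) b, Φ (a+t) + Φ (b-t) = qa.eval t := by
    intro t ht
    have hnn : ∀ x y, 0 ≤ Mr a t x y := by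
      intro x y
      fin_cases x <;> fin_cases y <;>
        · simp only [hMr, Matrix.cons_val', Matrix.cons_val_zero, Matrix.cons_val_one,
            Matrix.head_cons, Matrix.empty_val', Matrix.cons_val_fin_one, Matrix.head_fin_const]
          first
            | exact div_nonneg (by linarith [ht.1, ht.2]) (by norm_num)
    have hsum : ∑ x, ∑ y, Mr a t x y = 1 := by
      simp [hMr, Fin.sum_univ_three]
      ring
    have hmX : ∀ x, margX (Mr a t) x = 1/3 := by
      intro x
      fin_cases x <;> · simp [margX, hMr, Fin.sum_univ_three]; ring
    have hmY : ∀ y, margY (Mr a t) y = 1/3 := by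
      intro y
      fin_cases y <;> · simp [margY, hMr, Fin.sum_univ_three]; ring
    have harg : ∀ z : ℝ, z/9/(1/3*(1/3) : ℝ) = z := by
      intro z; rw [div_div]; norm_num
    have hphi : phiMI Φ (Mr a t) = (Φ (a+t) + Φ (b-t) + Φ (3-b-a))/3 := by
      simp only [phiMI, hmX, hmY, Fin.sum_univ_three]
      simp only [hMr, Matrix.cons_val', Matrix.cons_val_zero, Matrix.cons_val_one,
        Matrix.head_cons, Matrix.empty_val', Matrix.cons_val_fin_one, Matrix.head_fin_const,
        Matrix.cons_val_two, Matrix.tail_cons]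
      simp only [harg]
      ring
    have := hcon (Mr a t) hnn hsum
    rw [hphi, ← hEPa t] at this
    rw [hqa]
    simp only [eval_sub, eval_mul, eval_C]
    linarith
  have hD1 : ∀ t ∈ Set.Ioo (-a) b, D1 (a+t) - D1 (b-t) = qa.derivative.eval t := by
    intro t ht
    have hat : (0:ℝ) < a + t := by have := ht.1; linarith
    have hbt : (0:ℝ) < b - t := by have := ht.2; linarith
    have hF : HasDerivAt (fun s => Φ (a+s) + Φ (b-s)) (D1 (a+t) - D1 (b-t)) t := by
      have h1 : HasDerivAt (fun s : ℝ => a + s) 1 t := by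
        simpa using (hasDerivAt_id t).const_add a
      have h2 : HasDerivAt (fun s : ℝ => b - s) (-1) t := by
        simpa using (hasDerivAt_id t).const_sub b
      have := ((hΦ1 _ hat).comp t h1).add ((hΦ1 _ hbt).comp t h2)
      exact this.congr_deriv (by ring)
    have hev : (fun s => Φ (a+s) + Φ (b-s)) =ᶠ[nhds t] fun s => qa.eval s :=
      Filter.eventuallyEq_of_mem (isOpen_Ioo.mem_nhds ht) (fun s hs => hkey s hs)
    rw [← hF.deriv, hev.deriv_eq, Polynomial.deriv]
  have hD2 : ∀ t ∈ Set.Ioo (-a) b, D2 (a+t) + D2 (b-t) = qa.derivative.derivative.eval t := by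
    intro t ht
    have hat : (0:ℝ) < a + t := by have := ht.1; linarith
    have hbt : (0:ℝ) < b - t := by have := ht.2; linarith
    have hF : HasDerivAt (fun s => D1 (a+s) - D1 (b-s)) (D2 (a+t) + D2 (b-t)) t := by
      have h1 : HasDerivAt (fun s : ℝ => a + s) 1 t := by
        simpa using (hasDerivAt_id t).const_add a
      have h2 : HasDerivAt (fun s : ℝ => b - s) (-1) t := by
        simpa using (hasDerivAt_id t).const_sub b
      have := ((hΦ2 _ hat).comp t h1).sub ((hΦ2 _ hbt).comp t h2)
      exact this.congr_deriv (by ring)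
    have hev : (fun s => D1 (a+s) - D1 (b-s)) =ᶠ[nhds t] fun s => qa.derivative.eval s :=
      Filter.eventuallyEq_of_mem (isOpen_Ioo.mem_nhds ht) (fun s hs => hD1 s hs)
    rw [← hF.deriv, hev.deriv_eq, Polynomial.deriv]
  have h0 : (0:ℝ) ∈ Set.Ioo (-a) b := ⟨by linarith, hb.1⟩
  have := hD2 0 h0
  rw [add_zero, sub_zero] at this
  rw [this, hqa]
  rw [derivative_sub, derivative_C, sub_zero, derivative_C_mul, derivative_C_mul,
    Polynomial.derivative_map, Polynomial.derivative_map]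
  simp only [eval_mul, eval_C]
  congr 1
  rw [← Polynomial.coeff_zero_eq_eval_zero, Polynomial.coeff_map, coe_evalRingHom,
    Polynomial.coeff_zero_eq_eval_zero]

set_option maxHeartbeats 2000000 in
set_option maxHeartbeats 2000000 in
lemma stage2 (Φ : ℝ → ℝ) (F : ℝ[X]) (hF : ∀ x ∈ Set.Ioo (0:ℝ) 3, Φ x = F.eval x)
    (hdeg : 2 ≤ F.natDegree)
    {m : ℕ} (Dhat : (Fin m → Fin 3 × Fin 3) → ℝ)
    (hcon : ∀ P : Fin 3 → Fin 3 → ℝ, (∀ x y, 0 ≤ P x y) → (∑ x, ∑ y, P x y = 1) →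
       (∑ v : Fin m → Fin 3 × Fin 3, (∏ i, P (v i).1 (v i).2) * Dhat v) = phiMI Φ P) :
    False := by
  classical
  obtain ⟨e, hFnat⟩ : ∃ e, F.natDegree = e + 1 := ⟨F.natDegree - 1, by omega⟩
  have he1 : 1 ≤ e := by omega
  set Qp : Fin 3 → Fin 3 → ℝ[X] :=
    ![![C (1/6) + X, C (1/6) - X, 0], ![C (1/3), C (1/3), 0], ![0,0,0]] with hQp
  set Qr : ℝ → Fin 3 → Fin 3 → ℝ :=
    fun t => ![![1/6+t, 1/6-t, 0], ![1/3, 1/3, 0], ![0,0,0]] with hQr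
  have bridgeQ : ∀ (t : ℝ) (x y : Fin 3), (Qp x y).eval t = Qr t x y := by
    intro t x y
    fin_cases x <;> fin_cases y <;>
      simp [hQp, hQr, Matrix.vecHead, Matrix.vecTail]
  set Bq : ℝ[X] := ∑ v : Fin m → Fin 3 × Fin 3, (∏ i, Qp (v i).1 (v i).2) * C (Dhat v) with hBqdef
  have hBq : ∀ t : ℝ, Bq.eval t
      = ∑ v : Fin m → Fin 3 × Fin 3, (∏ i, Qr t (v i).1 (v i).2) * Dhat v := by
    intro t
    rw [hBqdef, eval_exp]
    exact Finset.sum_congr rfl fun v _ => by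
      rw [show (∏ i, (Qp (v i).1 (v i).2).eval t) = ∏ i, Qr t (v i).1 (v i).2 from
        Finset.prod_congr rfl fun i _ => bridgeQ t _ _]
  -- the main evaluation identity
  have heq : ∀ t ∈ Set.Ioo (-(1/100) : ℝ) (1/100),
      Bq.eval t = ((1+2*t)/6) * F.eval ((1+6*t)/(1+2*t))
        + ((1-2*t)/6) * F.eval ((1-6*t)/(1-2*t))
        + ((1+2*t)/3) * F.eval (1/(1+2*t)) + ((1-2*t)/3) * F.eval (1/(1-2*t)) := by
    intro t ht
    obtain ⟨ht1, ht2⟩ := ht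
    have hu : (0:ℝ) < 1+2*t := by linarith
    have hv : (0:ℝ) < 1-2*t := by linarith
    have hw : (0:ℝ) < 1+6*t := by linarith
    have hz : (0:ℝ) < 1-6*t := by linarith
    have hnn : ∀ x y, 0 ≤ Qr t x y := by
      intro x y
      fin_cases x <;> fin_cases y <;>
        simp [hQr, Matrix.vecHead, Matrix.vecTail] <;> linarith
    have hsum : ∑ x, ∑ y, Qr t x y = 1 := by
      simp [hQr, Fin.sum_univ_three]
      ring
    have hmX0 : margX (Qr t) 0 = 1/3 := by simp [margX, hQr, Fin.sum_univ_three]; ring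
    have hmX1 : margX (Qr t) 1 = 2/3 := by simp [margX, hQr, Fin.sum_univ_three]; ring
    have hmX2 : margX (Qr t) 2 = 0 := by
      simp [margX, hQr, Fin.sum_univ_three, Matrix.vecHead, Matrix.vecTail]
    have hmY0 : margY (Qr t) 0 = 1/2+t := by simp [margY, hQr, Fin.sum_univ_three]; ring
    have hmY1 : margY (Qr t) 1 = 1/2-t := by simp [margY, hQr, Fin.sum_univ_three]; ring
    have hmY2 : margY (Qr t) 2 = 0 := by
      simp [margY, hQr, Fin.sum_univ_three, Matrix.vecHead, Matrix.vecTail]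
    have hphi : phiMI Φ (Qr t)
        = (1/3*(1/2+t)) * Φ ((1/6+t)/(1/3*(1/2+t)))
          + (1/3*(1/2-t)) * Φ ((1/6-t)/(1/3*(1/2-t)))
          + (2/3*(1/2+t)) * Φ ((1/3)/(2/3*(1/2+t)))
          + (2/3*(1/2-t)) * Φ ((1/3)/(2/3*(1/2-t))) := by
      simp only [phiMI, Fin.sum_univ_three, hmX0, hmX1, hmX2, hmY0, hmY1, hmY2]
      simp only [hQr, Matrix.cons_val', Matrix.cons_val_zero, Matrix.cons_val_one,
        Matrix.head_cons, Matrix.empty_val', Matrix.cons_val_fin_one, Matrix.head_fin_const,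
        Matrix.cons_val_two, Matrix.tail_cons, Matrix.vecHead, Matrix.vecTail]
      ring
    have hr1 : (1/6+t)/(1/3*(1/2+t)) = (1+6*t)/(1+2*t) := by
      rw [div_eq_div_iff (by linarith) (by linarith)]; ring
    have hr2 : (1/6-t)/(1/3*(1/2-t)) = (1-6*t)/(1-2*t) := by
      rw [div_eq_div_iff (by linarith) (by linarith)]; ring
    have hr3 : (1/3)/(2/3*(1/2+t)) = 1/(1+2*t) := by
      rw [div_eq_div_iff (by linarith) (by linarith)]; ring
    have hr4 : (1/3)/(2/3*(1/2-t)) = 1/(1-2*t) := by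
      rw [div_eq_div_iff (by linarith) (by linarith)]; ring
    have hm1 : (1+6*t)/(1+2*t) ∈ Set.Ioo (0:ℝ) 3 :=
      ⟨div_pos hw hu, by rw [div_lt_iff₀ hu]; linarith⟩
    have hm2 : (1-6*t)/(1-2*t) ∈ Set.Ioo (0:ℝ) 3 :=
      ⟨div_pos hz hv, by rw [div_lt_iff₀ hv]; linarith⟩
    have hm3 : 1/(1+2*t) ∈ Set.Ioo (0:ℝ) 3 :=
      ⟨by positivity, by rw [div_lt_iff₀ hu]; linarith⟩
    have hm4 : 1/(1-2*t) ∈ Set.Ioo (0:ℝ) 3 :=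
      ⟨by positivity, by rw [div_lt_iff₀ hv]; linarith⟩
    rw [hBq t, hcon (Qr t) hnn hsum, hphi, hr1, hr2, hr3, hr4,
      hF _ hm1, hF _ hm2, hF _ hm3, hF _ hm4]
    ring
  -- polynomial identity
  set Up : ℝ[X] := C 1 + C 2 * X with hUp
  set Vp : ℝ[X] := C 1 - C 2 * X with hVp
  set Wp : ℝ[X] := C 1 + C 6 * X with hWp
  set Zp : ℝ[X] := C 1 - C 6 * X with hZp
  set S1 : ℝ[X] := ∑ k ∈ Finset.range (e+1+1), C (F.coeff k) * Wp^k * Up^(e+1-k) with hS1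
  set S2 : ℝ[X] := ∑ k ∈ Finset.range (e+1+1), C (F.coeff k) * Zp^k * Vp^(e+1-k) with hS2
  set S3 : ℝ[X] := ∑ k ∈ Finset.range (e+1+1), C (F.coeff k) * Up^(e+1-k) with hS3
  set S4 : ℝ[X] := ∑ k ∈ Finset.range (e+1+1), C (F.coeff k) * Vp^(e+1-k) with hS4
  have hpoly : C 6 * Bq * (Up^e*Vp^e)
      = Vp^e * S1 + Up^e * S2 + C 2 * (Vp^e * S3) + C 2 * (Up^e * S4) := by
    apply poly_eq_of_eval_eq_Ioo (show -(1/100:ℝ) < 1/100 by norm_num)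
    intro t ht
    have hu : (0:ℝ) < 1+2*t := by have h1 := ht.1; have h2 := ht.2; linarith
    have hv : (0:ℝ) < 1-2*t := by have h1 := ht.1; have h2 := ht.2; linarith
    have k1 := key_pow F (u := 1+2*t) (1+6*t) (ne_of_gt hu)
    have k2 := key_pow F (u := 1-2*t) (1-6*t) (ne_of_gt hv)
    have k3 := key_pow F (u := 1+2*t) 1 (ne_of_gt hu)
    have k4 := key_pow F (u := 1-2*t) 1 (ne_of_gt hv)
    rw [hFnat] at k1 k2 k3 k4
    simp only [one_pow, mul_one] at k3 k4
    simp only [hS1, hS2, hS3, hS4, hUp, hVp, hWp, hZp]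
    simp only [eval_mul, eval_add, eval_sub, eval_pow, eval_C, eval_X,
      Polynomial.eval_finset_sum]
    rw [heq t ht]
    linear_combination (1-2*t)^e * k1 + (1+2*t)^e * k2
      + 2*(1-2*t)^e * k3 + 2*(1+2*t)^e * k4
  -- evaluate at -1/2
  have h := congrArg (Polynomial.eval (-(1/2) : ℝ)) hpoly
  simp only [hS1, hS2, hS3, hS4, hUp, hVp, hWp, hZp] at h
  simp only [eval_mul, eval_add, eval_sub, eval_pow, eval_C, eval_X,
    Polynomial.eval_finset_sum] at h
  have e0 : (1 + 2 * (-(1/2) : ℝ)) = 0 := by norm_num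
  have e2 : (1 - 2 * (-(1/2) : ℝ)) = 2 := by norm_num
  have em2 : (1 + 6 * (-(1/2) : ℝ)) = -2 := by norm_num
  have e4 : (1 - 6 * (-(1/2) : ℝ)) = 4 := by norm_num
  simp only [e0, e2, em2, e4, zero_mul, mul_zero] at h
  have hz1 : (0:ℝ)^e = 0 := zero_pow (by omega)
  have hS1c : ∑ k ∈ Finset.range (e+1+1), F.coeff k * (-2:ℝ)^k * (0:ℝ)^(e+1-k)
      = F.coeff (e+1) * (-2)^(e+1) := by
    rw [Finset.sum_eq_single (e+1)]
    · rw [Nat.sub_self, pow_zero, mul_one]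
    · intro k hk hne
      have hklt : k < e+1+1 := Finset.mem_range.mp hk
      rw [zero_pow (show e+1-k ≠ 0 by omega), mul_zero]
    · intro hni; exact absurd (Finset.self_mem_range_succ (e+1)) hni
  have hS3c : ∑ k ∈ Finset.range (e+1+1), F.coeff k * (0:ℝ)^(e+1-k) = F.coeff (e+1) := by
    rw [Finset.sum_eq_single (e+1)]
    · rw [Nat.sub_self, pow_zero, mul_one]
    · intro k hk hne
      have hklt : k < e+1+1 := Finset.mem_range.mp hk
      rw [zero_pow (show e+1-k ≠ 0 by omega), mul_zero]
    · intro hni; exact absurd (Finset.self_mem_range_succ (e+1)) hni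
  rw [hS1c, hS3c] at h
  simp only [hz1, zero_mul, mul_zero, add_zero, zero_add] at h
  have hF0 : F ≠ 0 := by
    intro h0
    rw [h0, Polynomial.natDegree_zero] at hFnat
    omega
  have hcd : F.coeff (e+1) ≠ 0 := by
    rw [← hFnat]
    exact Polynomial.leadingCoeff_ne_zero.mpr hF0
  have hfac : (2:ℝ)^e * F.coeff (e+1) * ((-2)^(e+1) + 2) = 0 := by
    linear_combination -h
  rcases mul_eq_zero.mp hfac with h1 | h2
  · rcases mul_eq_zero.mp h1 with h3 | h4
    · exact absurd h3 (pow_ne_zero e two_ne_zero)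
    · exact hcd h4
  · have hneg : ((-2:ℝ))^(e+1) = -2 := by linarith
    rcases Nat.even_or_odd (e+1) with hpar | hpar
    · rw [hpar.neg_pow] at hneg
      have hp : (0:ℝ) < 2^(e+1) := by positivity
      linarith
    · rw [hpar.neg_pow] at hneg
      have h4 : (4:ℝ) ≤ 2^(e+1) := by
        calc (4:ℝ) = 2^2 := by norm_num
        _ ≤ 2^(e+1) := by
          exact pow_le_pow_right₀ (by norm_num) (by omega)
      linarith

end Aux

open Polynomial Set in
/-- Nonexistence of unbiased estimators for the Φ-mutual information on `{1,2,3}×{1,2,3}`: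
for any estimator `D̂` based on `m` i.i.d. samples there is a joint distribution `P` whose
Φ-mutual information is not the expectation of `D̂`. -/
theorem no_unbiased_estimator
    (Φ : ℝ → ℝ) (hconv : ConvexOn ℝ (Set.Ici 0) Φ)
    (hdiff : ContDiffOn ℝ 2 Φ (Set.Ioi 0))
    (hnotaff : ¬ ∃ c d : ℝ, ∀ a ∈ Set.Ioo (0 : ℝ) 3, Φ a = c * a + d)
    (m : ℕ) (Dhat : (Fin m → Fin 3 × Fin 3) → ℝ) :
    ∃ P : Fin 3 → Fin 3 → ℝ, (∀ x y, 0 ≤ P x y) ∧ (∑ x, ∑ y, P x y = 1) ∧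
      (∑ v : Fin m → Fin 3 × Fin 3, (∏ i, P (v i).1 (v i).2) * Dhat v) ≠ phiMI Φ P := by
  by_contra hcon0
  push_neg at hcon0
  obtain ⟨hdΦ, -, hd'⟩ := (contDiffOn_succ_iff_deriv_of_isOpen isOpen_Ioi).mp
    (by rw [← one_add_one_eq_two] at hdiff; exact hdiff)
  have hd'' : DifferentiableOn ℝ (deriv Φ) (Set.Ioi 0) := hd'.differentiableOn one_ne_zero
  have hΦ1 : ∀ x : ℝ, 0 < x → HasDerivAt Φ (deriv Φ x) x :=
    fun x hx => (hdΦ.differentiableAt (isOpen_Ioi.mem_nhds hx)).hasDerivAt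
  have hΦ2 : ∀ x : ℝ, 0 < x → HasDerivAt (deriv Φ) (deriv (deriv Φ) x) x :=
    fun x hx => (hd''.differentiableAt (isOpen_Ioi.mem_nhds hx)).hasDerivAt
  set D2 := deriv (deriv Φ) with hD2def
  have key1 : ∀ b ∈ Set.Ioo (0:ℝ) 3, ∃ r : ℝ[X],
      ∀ a ∈ Set.Ioo 0 (3-b), D2 a + D2 b = r.eval a :=
    fun b hb => stage1 Φ (deriv Φ) D2 hΦ1 hΦ2 Dhat hcon0 hb
  obtain ⟨r1, hr1⟩ := key1 1 ⟨one_pos, by norm_num⟩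
  have hp23 : ∀ x ∈ Set.Ioo (0:ℝ) 3, D2 x = (r1 - C (D2 1)).eval x := by
    intro x hx
    rcases lt_or_ge x 2 with hx2 | hx2
    · have := hr1 x ⟨hx.1, by norm_num; linarith⟩
      simp only [eval_sub, eval_C]; linarith
    · set b := (3 - x)/2 with hbdef
      have hb : b ∈ Set.Ioo (0:ℝ) 3 := ⟨by rw [hbdef]; linarith [hx.2], by rw [hbdef]; linarith [hx.1]⟩
      obtain ⟨rb, hrb⟩ := key1 b hb
      have hble : b ≤ 1/2 := by rw [hbdef]; linarith
      have hagree : ∀ y ∈ Set.Ioo (0:ℝ) 1, (rb - C (D2 b)).eval y = (r1 - C (D2 1)).eval y := by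
        intro y hy
        have h1 := hrb y ⟨hy.1, by linarith [hy.2]⟩
        have h2 := hr1 y ⟨hy.1, by norm_num; linarith [hy.2]⟩
        simp only [eval_sub, eval_C]; linarith
      have hpe := poly_eq_of_eval_eq_Ioo one_pos hagree
      have hx3b : x ∈ Set.Ioo (0:ℝ) (3-b) := ⟨hx.1, by rw [hbdef]; linarith [hx.2]⟩
      have hx' := hrb x hx3b
      calc D2 x = (rb - C (D2 b)).eval x := by simp only [eval_sub, eval_C]; linarith
      _ = _ := by rw [hpe]
  obtain ⟨F1, hF1d, hF1⟩ := rep_of_deriv (g := deriv Φ) (q := r1 - C (D2 1))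
      (show (0:ℝ) < 3 by norm_num)
      (fun x hx => by rw [← hp23 x hx]; exact hΦ2 x hx.1)
  obtain ⟨F, hFd, hFrep⟩ := rep_of_deriv (g := Φ) (q := F1)
      (show (0:ℝ) < 3 by norm_num)
      (fun x hx => by
        have := hΦ1 x hx.1
        rwa [hF1 x hx] at this)
  rcases le_or_gt F.natDegree 1 with hdeg | hdeg
  · apply hnotaff
    refine ⟨F.coeff 1, F.coeff 0, fun a ha => ?_⟩
    rw [hFrep a ha]
    conv_lhs => rw [Polynomial.eq_X_add_C_of_natDegree_le_one hdeg]
    simp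
  · exact stage2 Φ F hFrep (by omega) Dhat hcon0
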